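/- Let A be a symmetric cellular algebra over an integral domain R. Define I = I^Λ + I_D^Λ, where I^Λ = Σ_{k_λ=0} span{C^λ_{S,V}D^λ_{V,U}} and I_D^Λ = Σ_{k_λ=0} span{D^λ_{U,V}C^λ_{V,S}}. Then I³ = 0; in particular I ⊆ rad A. -/

import Mathlib

/-!
Write `A^{<λ}` for the span of the `C^μ` with `μ < λ`, and `D^{>λ}` for the span of the `D^μ`
with `μ > λ`. The cellular axioms make `A^{<λ}` a two-sided ideal, and reading coefficients off
through `τ (C * D) = δ` carries this over to the dual basis: modulo `D^{>λ}`, `A` acts on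
`D^λ_{U,V}` from either side through the same structure constants `r` as on `C^λ`, while
`C^λ A D^μ = 0` unless `μ ≤ λ` and `D^λ A C^μ = 0` unless `λ ≤ μ`. At a single level, modulo
`D^{>λ}`,
  `D_{U,Q} C_{P,V} D_{V,W} ≡ δ_{Q,P} (∑_X Φ(V,X) Ψ(X,V)) D_{U,W} = δ_{Q,P} k_λ D_{U,W}`
(`Φ` is symmetric because of the anti-involution `ι`), and `C^λ` kills `D^{>λ}` on both sides.
So if `k_λ = 0`, then `g a g' = 0` for every `a` and any two generators `g, g'` of `I^Λ`, and
likewise for `I_D^Λ`; both spans are left ideals. Each term of the expansion of `x y z` with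
`x, y, z ∈ I^Λ + I_D^Λ` contains such a product, so `I³ = 0`. As `I` is a left ideal, every
`y x` with `x ∈ I` is nilpotent, so `1 + y x` is a unit and `x ∈ rad A`.
-/

open Submodule

theorem mem_jacobson_bot_of_isNilpotent_mul {A : Type*} [Ring A] {x : A}
    (h : ∀ y, IsNilpotent (y * x)) :
    x ∈ Ideal.jacobson (⊥ : Ideal A) := by
  refine Ideal.mem_jacobson_iff.mpr fun y => ?_
  obtain ⟨u, hu⟩ := (h y).isUnit_add_one
  refine ⟨↑u⁻¹, ?_⟩
  rw [Ideal.mem_bot, mul_assoc, ← mul_add_one, ← hu, Units.inv_mul, sub_self]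

section SpanProducts

variable {R A : Type*} [CommRing R] [Ring A] [Algebra R A]

theorem mul_eq_zero_of_right_mem_span {s : Set A} {c x : A} (h : ∀ g ∈ s, c * g = 0)
    (hx : x ∈ span R s) : c * x = 0 := by
  induction hx using span_induction with
  | mem g hg => exact h g hg
  | zero => exact mul_zero c
  | add x y _ _ hx hy => rw [mul_add, hx, hy, add_zero]
  | smul a x _ hx => rw [mul_smul_comm, hx, smul_zero]

theorem mul_eq_zero_of_left_mem_span {s : Set A} {c x : A} (h : ∀ g ∈ s, g * c = 0)
    (hx : x ∈ span R s) : x * c = 0 := by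
  induction hx using span_induction with
  | mem g hg => exact h g hg
  | zero => exact zero_mul c
  | add x y _ _ hx hy => rw [add_mul, hx, hy, add_zero]
  | smul a x _ hx => rw [smul_mul_assoc, hx, smul_zero]

theorem mul_mem_span_of_forall_mem {s : Set A} (h : ∀ a, ∀ g ∈ s, a * g ∈ span R s) (a : A)
    {x : A} (hx : x ∈ span R s) : a * x ∈ span R s :=
  (span_le (p := (span R s).comap (LinearMap.mulLeft R a))).mpr (h a) hx

theorem mul_mul_eq_zero_of_mem_span {s : Set A} (h : ∀ g ∈ s, ∀ a, ∀ g' ∈ s, g * a * g' = 0)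
    {u v : A} (hu : u ∈ span R s) (a : A) (hv : v ∈ span R s) : u * a * v = 0 := by
  rw [mul_assoc]
  refine mul_eq_zero_of_left_mem_span (fun g hg => ?_) hu
  rw [← mul_assoc]
  exact mul_eq_zero_of_right_mem_span (h g hg a) hv

theorem mul_mul_eq_zero_of_mem_sup {P Q : Submodule R A}
    (hP : ∀ u ∈ P, ∀ a, ∀ v ∈ P, u * a * v = 0) (hQ : ∀ u ∈ Q, ∀ a, ∀ v ∈ Q, u * a * v = 0)
    {x y z : A} (hx : x ∈ P ⊔ Q) (hy : y ∈ P ⊔ Q) (hz : z ∈ P ⊔ Q) : x * y * z = 0 := by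
  obtain ⟨x₁, hx₁, x₂, hx₂, rfl⟩ := mem_sup.mp hx
  obtain ⟨y₁, hy₁, y₂, hy₂, rfl⟩ := mem_sup.mp hy
  obtain ⟨z₁, hz₁, z₂, hz₂, rfl⟩ := mem_sup.mp hz
  have hP' : ∀ u ∈ P, ∀ v ∈ P, u * v = 0 := fun u hu v hv => by simpa using hP u hu 1 v hv
  have hQ' : ∀ u ∈ Q, ∀ v ∈ Q, u * v = 0 := fun u hu v hv => by simpa using hQ u hu 1 v hv
  calc (x₁ + x₂) * (y₁ + y₂) * (z₁ + z₂)
      = x₁ * y₂ * z₁ + x₂ * y₁ * z₂ + x₁ * y₁ * (z₁ + z₂) + x₁ * (y₂ * z₂) + x₂ * (y₁ * z₁)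
          + x₂ * y₂ * (z₁ + z₂) := by noncomm_ring
    _ = 0 := by
      rw [hP x₁ hx₁ y₂ z₁ hz₁, hQ x₂ hx₂ y₁ z₂ hz₂, hP' x₁ hx₁ y₁ hy₁, hQ' y₂ hy₂ z₂ hz₂,
        hP' y₁ hy₁ z₁ hz₁, hQ' x₂ hx₂ y₂ hy₂]
      simp

theorem cube_eq_zero_and_mem_jacobson_of_sup_span {s t : Set A}
    (hs : ∀ g ∈ s, ∀ a, ∀ g' ∈ s, g * a * g' = 0) (ht : ∀ g ∈ t, ∀ a, ∀ g' ∈ t, g * a * g' = 0)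
    (hs' : ∀ a, ∀ g ∈ s, a * g ∈ span R s) (ht' : ∀ a, ∀ g ∈ t, a * g ∈ span R t) :
    (∀ x ∈ span R s ⊔ span R t, ∀ y ∈ span R s ⊔ span R t, ∀ z ∈ span R s ⊔ span R t,
      x * y * z = 0) ∧ ∀ x ∈ span R s ⊔ span R t, x ∈ Ideal.jacobson (⊥ : Ideal A) := by
  have hcube : ∀ x ∈ span R s ⊔ span R t, ∀ y ∈ span R s ⊔ span R t,
      ∀ z ∈ span R s ⊔ span R t, x * y * z = 0 := fun x hx y hy z hz =>
    mul_mul_eq_zero_of_mem_sup (fun _ hu a _ hv => mul_mul_eq_zero_of_mem_span hs hu a hv)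
      (fun _ hu a _ hv => mul_mul_eq_zero_of_mem_span ht hu a hv) hx hy hz
  refine ⟨hcube, fun x hx => mem_jacobson_bot_of_isNilpotent_mul fun y => ⟨3, ?_⟩⟩
  have hyx : y * x ∈ span R s ⊔ span R t := by
    obtain ⟨x₁, hx₁, x₂, hx₂, rfl⟩ := mem_sup.mp hx
    rw [mul_add]
    exact add_mem (mem_sup_left (mul_mem_span_of_forall_mem hs' y hx₁))
      (mem_sup_right (mul_mem_span_of_forall_mem ht' y hx₂))
  rw [pow_three, ← mul_assoc]
  exact hcube _ hyx _ hyx _ hyx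

end SpanProducts

section Cellular

variable {R A : Type*} [CommRing R] [Ring A] [Algebra R A] {Λ : Type*} {M : Λ → Type*}

variable (R) in
def cellSpan (E : ∀ l, M l → M l → A) (p : Λ → Prop) : Submodule R A :=
  span R {x | ∃ m, ∃ U V : M m, p m ∧ x = E m U V}

theorem mem_cellSpan {E : ∀ l, M l → M l → A} {p : Λ → Prop} {l : Λ} (hl : p l) (U V : M l) :
    E l U V ∈ cellSpan R E p :=
  subset_span ⟨l, U, V, hl, rfl⟩

theorem cellSpan_le {E : ∀ l, M l → M l → A} {p : Λ → Prop} {N : Submodule R A}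
    (h : ∀ m, p m → ∀ U V : M m, E m U V ∈ N) : cellSpan R E p ≤ N :=
  span_le.mpr fun _ ⟨m, U, V, hm, hx⟩ => hx ▸ h m hm U V

theorem cellSpan_mono {E : ∀ l, M l → M l → A} {p q : Λ → Prop} (h : ∀ m, p m → q m) :
    cellSpan R E p ≤ cellSpan R E q :=
  cellSpan_le fun m hm U V => mem_cellSpan (h m hm) U V

section Duality

variable [DecidableEq Λ] [∀ l, DecidableEq (M l)]

def IsTraceDual (τ : A →ₗ[R] R) (C D : ∀ l, M l → M l → A) : Prop :=
  ∀ l m (S T : M l) (U V : M m), τ (C l S T * D m U V) =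
    if (⟨l, (S, T)⟩ : (l : Λ) × (M l × M l)) = ⟨m, (V, U)⟩ then 1 else 0

namespace IsTraceDual

variable {τ : A →ₗ[R] R} {C D : ∀ l, M l → M l → A}

theorem trace_C_mul_D_self (hd : IsTraceDual τ C D) {l : Λ} (S T U V : M l) :
    τ (C l S T * D l U V) = if S = V ∧ T = U then 1 else 0 := by
  simp only [hd l l, Sigma.mk.inj_iff, heq_eq_eq, Prod.mk.injEq, true_and]

theorem trace_C_mul_D_of_ne (hd : IsTraceDual τ C D) {l m : Λ} (h : l ≠ m) (S T : M l)
    (U V : M m) : τ (C l S T * D m U V) = 0 := by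
  rw [hd, if_neg fun e => h (congrArg Sigma.fst e)]

theorem trace_C_mul_D_apply (hd : IsTraceDual τ C D) {l : Λ} (S T : M l)
    (b : (l : Λ) × (M l × M l)) :
    τ (C l S T * D b.1 b.2.1 b.2.2) = if b = ⟨l, (T, S)⟩ then 1 else 0 := by
  obtain ⟨m, U, V⟩ := b
  obtain rfl | h := eq_or_ne l m
  · simp only [hd.trace_C_mul_D_self, Sigma.mk.inj_iff, heq_eq_eq, Prod.mk.injEq, true_and]
    exact if_congr (by tauto) rfl rfl
  · rw [hd.trace_C_mul_D_of_ne h, if_neg fun e => h (congrArg Sigma.fst e).symm]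

theorem trace_mul_D_eq_zero (hd : IsTraceDual τ C D) {p : Λ → Prop} {y : A}
    (hy : y ∈ cellSpan R C p) {l : Λ} (hl : ¬ p l) (U V : M l) : τ (y * D l U V) = 0 :=
  cellSpan_le (N := LinearMap.ker (τ ∘ₗ LinearMap.mulRight R (D l U V)))
    (fun m hm X Y => hd.trace_C_mul_D_of_ne (fun h : m = l => hl (h ▸ hm)) X Y U V) hy

theorem eq_zero_of_smul_C_mem (hd : IsTraceDual τ C D) {p : Λ → Prop} {l : Λ} {S T : M l}
    {c : R} (h : c • C l S T ∈ cellSpan R C p) (hl : ¬ p l) : c = 0 := by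
  have := hd.trace_mul_D_eq_zero h hl T S
  rwa [smul_mul_assoc, map_smul, hd.trace_C_mul_D_self, if_pos ⟨rfl, rfl⟩, smul_eq_mul,
    mul_one] at this

theorem mem_cellSpan_of_trace_eq_zero (hd : IsTraceDual τ C D)
    (hspan : span R (Set.range fun b : (l : Λ) × (M l × M l) => D b.1 b.2.1 b.2.2) = ⊤)
    {p : Λ → Prop} {x : A} (h : ∀ ν, ¬ p ν → ∀ P Q : M ν, τ (C ν P Q * x) = 0) :
    x ∈ cellSpan R D p := by
  obtain ⟨c, rfl⟩ := Finsupp.mem_span_range_iff_exists_finsupp.mp (hspan ▸ mem_top :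
    x ∈ span R (Set.range fun b : (l : Λ) × (M l × M l) => D b.1 b.2.1 b.2.2))
  refine sum_mem fun ⟨ν, P, Q⟩ hb => ?_
  by_cases hν : p ν
  · exact smul_mem _ _ (mem_cellSpan hν P Q)
  · have hcoef : τ (C ν Q P * c.sum fun b a => a • D b.1 b.2.1 b.2.2) = c ⟨ν, (P, Q)⟩ := by
      simp only [Finsupp.sum, Finset.mul_sum, mul_smul_comm, map_sum, map_smul,
        hd.trace_C_mul_D_apply, smul_eq_mul, mul_ite, mul_one, mul_zero, Finset.sum_ite_eq']
      exact if_pos hb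
    show c ⟨ν, (P, Q)⟩ • D ν P Q ∈ _
    rw [← hcoef, h ν hν Q P, zero_smul]
    exact zero_mem _

theorem eq_zero_of_trace_eq_zero (hd : IsTraceDual τ C D)
    (hspan : span R (Set.range fun b : (l : Λ) × (M l × M l) => D b.1 b.2.1 b.2.2) = ⊤)
    {x : A} (h : ∀ ν (P Q : M ν), τ (C ν P Q * x) = 0) : x = 0 := by
  have hx := hd.mem_cellSpan_of_trace_eq_zero hspan (p := fun _ => False) fun ν _ => h ν
  have hbot : cellSpan R D (fun _ => False) = ⊥ :=
    span_eq_bot.mpr fun _ ⟨_, _, _, hfalse, _⟩ => hfalse.elim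
  rwa [hbot, mem_bot] at hx

end IsTraceDual

end Duality

variable [PartialOrder Λ] [∀ l, Fintype (M l)]

structure IsCellular (C : ∀ l, M l → M l → A) (ι : A →ₗ[R] A) (r : A → ∀ l, M l → M l → R) :
    Prop where
  ι_ι : ∀ x, ι (ι x) = x
  ι_mul : ∀ x y, ι (x * y) = ι y * ι x
  ι_C_sub_mem : ∀ l (S T : M l), ι (C l S T) - C l T S ∈ cellSpan R C (· < l)
  mul_C_sub_mem : ∀ (a : A) l (S T : M l),
    a * C l S T - ∑ S', r a l S' S • C l S' T ∈ cellSpan R C (· < l)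

namespace IsCellular

variable {C : ∀ l, M l → M l → A} {ι : A →ₗ[R] A} {r : A → ∀ l, M l → M l → R}

theorem mul_C_mem_le (hC : IsCellular C ι r) (a : A) (l : Λ) (S T : M l) :
    a * C l S T ∈ cellSpan R C (· ≤ l) := by
  have hsum : ∑ S', r a l S' S • C l S' T ∈ cellSpan R C (· ≤ l) :=
    sum_mem fun S' _ => smul_mem _ _ (mem_cellSpan (p := (· ≤ l)) le_rfl S' T)
  exact (sub_mem_iff_left _ hsum).mp
    (cellSpan_mono (fun _ => le_of_lt) (hC.mul_C_sub_mem a l S T))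

theorem mul_mem_lt (hC : IsCellular C ι r) (a : A) {ν : Λ} {y : A}
    (hy : y ∈ cellSpan R C (· < ν)) : a * y ∈ cellSpan R C (· < ν) :=
  cellSpan_le (N := (cellSpan R C (· < ν)).comap (LinearMap.mulLeft R a))
    (fun m hm X Y => cellSpan_mono (fun _ (h : _ ≤ m) => h.trans_lt hm) (hC.mul_C_mem_le a m X Y))
    hy

theorem ι_mem_lt (hC : IsCellular C ι r) {ν : Λ} {y : A} (hy : y ∈ cellSpan R C (· < ν)) :
    ι y ∈ cellSpan R C (· < ν) :=
  cellSpan_le (N := (cellSpan R C (· < ν)).comap ι) (fun m hm X Y =>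
    (sub_mem_iff_left (cellSpan R C (· < ν)) (mem_cellSpan hm Y X)).mp
      (cellSpan_mono (fun _ (h : _ < m) => h.trans hm) (hC.ι_C_sub_mem m X Y))) hy

theorem C_mul_sub_mem (hC : IsCellular C ι r) (l : Λ) (S T : M l) (a : A) :
    C l S T * a - ∑ T', r (ι a) l T' T • C l S T' ∈ cellSpan R C (· < l) := by
  rw [← hC.ι_ι (C l S T * a - _)]
  refine hC.ι_mem_lt ?_
  have key : ι (C l S T * a - ∑ T', r (ι a) l T' T • C l S T') =
      ι a * (ι (C l S T) - C l T S) + (ι a * C l T S - ∑ T', r (ι a) l T' T • C l T' S) -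
        ∑ T', r (ι a) l T' T • (ι (C l S T') - C l T' S) := by
    simp only [map_sub, map_sum, map_smul, hC.ι_mul, mul_sub, smul_sub, Finset.sum_sub_distrib]
    abel
  rw [key]
  exact sub_mem (add_mem (hC.mul_mem_lt _ (hC.ι_C_sub_mem l S T)) (hC.mul_C_sub_mem _ l T S))
    (sum_mem fun T' _ => smul_mem _ _ (hC.ι_C_sub_mem l S T'))

theorem C_mul_mem_le (hC : IsCellular C ι r) (l : Λ) (S T : M l) (a : A) :
    C l S T * a ∈ cellSpan R C (· ≤ l) := by
  have hsum : ∑ T', r (ι a) l T' T • C l S T' ∈ cellSpan R C (· ≤ l) :=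
    sum_mem fun T' _ => smul_mem _ _ (mem_cellSpan (p := (· ≤ l)) le_rfl S T')
  exact (sub_mem_iff_left _ hsum).mp
    (cellSpan_mono (fun _ => le_of_lt) (hC.C_mul_sub_mem l S T a))

theorem mem_lt_mul (hC : IsCellular C ι r) {ν : Λ} {y : A} (hy : y ∈ cellSpan R C (· < ν))
    (a : A) : y * a ∈ cellSpan R C (· < ν) :=
  cellSpan_le (N := (cellSpan R C (· < ν)).comap (LinearMap.mulRight R a))
    (fun m hm X Y => cellSpan_mono (fun _ (h : _ ≤ m) => h.trans_lt hm) (hC.C_mul_mem_le m X Y a))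
    hy

end IsCellular

section Symmetric

variable [DecidableEq Λ] [∀ l, DecidableEq (M l)]

structure IsSymmetricCellular (C D : ∀ l, M l → M l → A) (ι : A →ₗ[R] A)
    (r : A → ∀ l, M l → M l → R) (τ : A →ₗ[R] R) : Prop extends IsCellular C ι r where
  trace_mul_comm : ∀ x y, τ (x * y) = τ (y * x)
  dual : IsTraceDual τ C D
  span_D : span R (Set.range fun b : (l : Λ) × (M l × M l) => D b.1 b.2.1 b.2.2) = ⊤

variable {C D : ∀ l, M l → M l → A} {ι : A →ₗ[R] A} {r : A → ∀ l, M l → M l → R}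
  {τ : A →ₗ[R] R} {Φ Ψ : ∀ l, M l → M l → R} {k : Λ → R}

namespace IsCellular

theorem trace_mul_C_mul_D_self (hC : IsCellular C ι r) (hd : IsTraceDual τ C D) (a : A)
    {l : Λ} (P Q U V : M l) : τ (a * C l P Q * D l U V) = if Q = U then r a l V P else 0 := by
  have hlow := hd.trace_mul_D_eq_zero (hC.mul_C_sub_mem a l P Q) (lt_irrefl l) U V
  rw [sub_mul, map_sub, sub_eq_zero] at hlow
  rw [hlow, Finset.sum_mul, map_sum]
  simp only [smul_mul_assoc, map_smul, hd.trace_C_mul_D_self, smul_eq_mul, mul_ite, mul_one,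
    mul_zero]
  by_cases hQU : Q = U <;> simp [hQU]

theorem trace_C_mul_mul_D_self (hC : IsCellular C ι r) (hd : IsTraceDual τ C D) (a : A)
    {l : Λ} (P Q U V : M l) :
    τ (C l P Q * a * D l U V) = if P = V then r (ι a) l U Q else 0 := by
  have hlow := hd.trace_mul_D_eq_zero (hC.C_mul_sub_mem l P Q a) (lt_irrefl l) U V
  rw [sub_mul, map_sub, sub_eq_zero] at hlow
  rw [hlow, Finset.sum_mul, map_sum]
  simp only [smul_mul_assoc, map_smul, hd.trace_C_mul_D_self, smul_eq_mul, mul_ite, mul_one,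
    mul_zero]
  by_cases hPV : P = V <;> simp [hPV]

theorem Φ_symm (hC : IsCellular C ι r) (hd : IsTraceDual τ C D)
    (hΦ : ∀ l (S T U V : M l), C l S T * C l U V - Φ l T U • C l S V ∈ cellSpan R C (· < l))
    {l : Λ} (T U : M l) : Φ l T U = Φ l U T := by
  have key : (Φ l U T - Φ l T U) • C l T U =
      ι (C l U T * C l U T - Φ l T U • C l U T) - (C l T U * C l T U - Φ l U T • C l T U)
        - (ι (C l U T) - C l T U) * ι (C l U T) - C l T U * (ι (C l U T) - C l T U)
        + Φ l T U • (ι (C l U T) - C l T U) := by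
    simp only [map_sub, map_smul, hC.ι_mul, sub_mul, mul_sub, sub_smul, smul_sub]
    abel
  have hmem : (Φ l U T - Φ l T U) • C l T U ∈ cellSpan R C (· < l) := by
    rw [key]
    exact add_mem (sub_mem (sub_mem (sub_mem (hC.ι_mem_lt (hΦ l U T U T)) (hΦ l T U T U))
      (hC.mem_lt_mul (hC.ι_C_sub_mem l U T) _)) (hC.mul_mem_lt _ (hC.ι_C_sub_mem l U T)))
      (smul_mem _ _ (hC.ι_C_sub_mem l U T))
  exact (sub_eq_zero.mp (hd.eq_zero_of_smul_C_mem hmem (lt_irrefl l))).symm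

theorem r_C_self (hC : IsCellular C ι r) (hd : IsTraceDual τ C D)
    (hΦ : ∀ l (S T U V : M l), C l S T * C l U V - Φ l T U • C l S V ∈ cellSpan R C (· < l))
    {l : Λ} (S T X Y : M l) : r (C l S T) l X Y = if S = X then Φ l T Y else 0 := by
  have h := hd.trace_mul_D_eq_zero (hΦ l S T Y T) (lt_irrefl l) T X
  rw [sub_mul, map_sub, sub_eq_zero, hC.trace_mul_C_mul_D_self hd, if_pos rfl, smul_mul_assoc,
    map_smul, hd.trace_C_mul_D_self, smul_eq_mul] at h
  rw [h]
  simp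

end IsCellular

namespace IsSymmetricCellular

theorem C_mul_D_eq_zero_of_not_le (hA : IsSymmetricCellular C D ι r τ) {l m : Λ}
    (h : ¬ m ≤ l) (S T : M l) (U V : M m) : C l S T * D m U V = 0 :=
  hA.dual.eq_zero_of_trace_eq_zero hA.span_D fun _ _ _ => by
    rw [← mul_assoc]
    exact hA.dual.trace_mul_D_eq_zero (hA.mul_C_mem_le _ l S T) h U V

theorem D_mul_C_eq_zero_of_not_le (hA : IsSymmetricCellular C D ι r τ) {l m : Λ}
    (h : ¬ l ≤ m) (U V : M l) (S T : M m) : D l U V * C m S T = 0 :=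
  hA.dual.eq_zero_of_trace_eq_zero hA.span_D fun _ _ _ => by
    rw [← mul_assoc, hA.trace_mul_comm, ← mul_assoc]
    exact hA.dual.trace_mul_D_eq_zero (hA.C_mul_mem_le m S T _) h U V

theorem C_mul_D_eq_zero_of_ne (hA : IsSymmetricCellular C D ι r τ) {l : Λ} {S T U V : M l}
    (h : T ≠ U) : C l S T * D l U V = 0 :=
  hA.dual.eq_zero_of_trace_eq_zero hA.span_D fun _ _ _ => by
    rw [← mul_assoc, hA.trace_mul_C_mul_D_self hA.dual, if_neg h]

theorem mul_eq_zero_of_mem_cellSpan_C_D (hA : IsSymmetricCellular C D ι r τ)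
    {p q : Λ → Prop} {y h : A} (hy : y ∈ cellSpan R C p) (hh : h ∈ cellSpan R D q)
    (hpq : ∀ m n, p m → q n → ¬ n ≤ m) : y * h = 0 :=
  mul_eq_zero_of_left_mem_span (by
    rintro _ ⟨m, S, T, hm, rfl⟩
    refine mul_eq_zero_of_right_mem_span ?_ hh
    rintro _ ⟨n, U, V, hn, rfl⟩
    exact hA.C_mul_D_eq_zero_of_not_le (hpq m n hm hn) S T U V) hy

theorem mul_eq_zero_of_mem_cellSpan_D_C (hA : IsSymmetricCellular C D ι r τ)
    {p q : Λ → Prop} {h y : A} (hh : h ∈ cellSpan R D q) (hy : y ∈ cellSpan R C p)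
    (hpq : ∀ m n, p m → q n → ¬ n ≤ m) : h * y = 0 :=
  mul_eq_zero_of_left_mem_span (by
    rintro _ ⟨n, U, V, hn, rfl⟩
    refine mul_eq_zero_of_right_mem_span ?_ hy
    rintro _ ⟨m, S, T, hm, rfl⟩
    exact hA.D_mul_C_eq_zero_of_not_le (hpq m n hm hn) U V S T) hh

theorem C_mul_mul_D_eq_zero (hA : IsSymmetricCellular C D ι r τ) {l m : Λ} (h : ¬ m ≤ l)
    (S T : M l) (x : A) (U V : M m) : C l S T * x * D m U V = 0 :=
  hA.mul_eq_zero_of_mem_cellSpan_C_D (hA.C_mul_mem_le l S T x)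
    (mem_cellSpan (p := (m ≤ ·)) le_rfl U V) fun _ _ ha hb hba => h (hb.trans (hba.trans ha))

theorem D_mul_mul_C_eq_zero (hA : IsSymmetricCellular C D ι r τ) {l m : Λ} (h : ¬ l ≤ m)
    (U V : M l) (x : A) (S T : M m) : D l U V * x * C m S T = 0 := by
  rw [mul_assoc]
  exact hA.mul_eq_zero_of_mem_cellSpan_D_C (mem_cellSpan (p := (l ≤ ·)) le_rfl U V)
    (hA.mul_C_mem_le x m S T) fun _ _ ha hb hba => h (hb.trans (hba.trans ha))

theorem C_mul_eq_zero_of_mem_gt (hA : IsSymmetricCellular C D ι r τ) {l : Λ} (S T : M l)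
    {h : A} (hh : h ∈ cellSpan R D (l < ·)) : C l S T * h = 0 :=
  hA.mul_eq_zero_of_mem_cellSpan_C_D (mem_cellSpan (p := (· ≤ l)) le_rfl S T) hh
    fun _ _ ha hb hba => (hb.trans_le (hba.trans ha)).false

theorem mem_gt_mul_C_eq_zero (hA : IsSymmetricCellular C D ι r τ) {l : Λ} {h : A}
    (hh : h ∈ cellSpan R D (l < ·)) (S T : M l) : h * C l S T = 0 :=
  hA.mul_eq_zero_of_mem_cellSpan_D_C hh (mem_cellSpan (p := (· ≤ l)) le_rfl S T)
    fun _ _ ha hb hba => (hb.trans_le (hba.trans ha)).false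

theorem mem_lt_mul_D_eq_zero (hA : IsSymmetricCellular C D ι r τ) {l : Λ} {y : A}
    (hy : y ∈ cellSpan R C (· < l)) (U V : M l) : y * D l U V = 0 :=
  hA.mul_eq_zero_of_mem_cellSpan_C_D hy (mem_cellSpan (p := (l ≤ ·)) le_rfl U V)
    fun _ _ ha hb hba => (ha.trans_le (hb.trans hba)).false

theorem D_mul_sub_mem (hA : IsSymmetricCellular C D ι r τ) {l : Λ} (U V : M l) (a : A) :
    D l U V * a - ∑ Q, r a l V Q • D l U Q ∈ cellSpan R D (l < ·) := by
  refine hA.dual.mem_cellSpan_of_trace_eq_zero hA.span_D fun ν hν P Q => ?_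
  have hcomm : τ (C ν P Q * (D l U V * a)) = τ (a * C ν P Q * D l U V) := by
    rw [← mul_assoc, hA.trace_mul_comm, ← mul_assoc]
  rw [mul_sub, map_sub, hcomm, sub_eq_zero, Finset.mul_sum, map_sum]
  simp only [mul_smul_comm, map_smul, smul_eq_mul]
  obtain rfl | hνl := eq_or_ne ν l
  · rw [hA.trace_mul_C_mul_D_self hA.dual]
    simp only [hA.dual.trace_C_mul_D_self, mul_ite, mul_one, mul_zero]
    by_cases hQU : Q = U <;> simp [hQU]
  · rw [hA.dual.trace_mul_D_eq_zero (hA.mul_C_mem_le a ν P Q)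
      (fun h => hν (h.lt_of_ne hνl.symm)) U V]
    simp only [hA.dual.trace_C_mul_D_of_ne hνl, mul_zero, Finset.sum_const_zero]

theorem mul_D_sub_mem (hA : IsSymmetricCellular C D ι r τ) {l : Λ} (U V : M l) (a : A) :
    a * D l U V - ∑ P, r (ι a) l U P • D l P V ∈ cellSpan R D (l < ·) := by
  refine hA.dual.mem_cellSpan_of_trace_eq_zero hA.span_D fun ν hν P Q => ?_
  rw [mul_sub, map_sub, ← mul_assoc, sub_eq_zero, Finset.mul_sum, map_sum]
  simp only [mul_smul_comm, map_smul, smul_eq_mul]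
  obtain rfl | hνl := eq_or_ne ν l
  · rw [hA.trace_C_mul_mul_D_self hA.dual]
    simp only [hA.dual.trace_C_mul_D_self, mul_ite, mul_one, mul_zero]
    by_cases hPV : P = V <;> simp [hPV]
  · rw [hA.dual.trace_mul_D_eq_zero (hA.C_mul_mem_le ν P Q a)
      (fun h => hν (h.lt_of_ne hνl.symm)) U V]
    simp only [hA.dual.trace_C_mul_D_of_ne hνl, mul_zero, Finset.sum_const_zero]

theorem D_mul_mem_ge (hA : IsSymmetricCellular C D ι r τ) {l : Λ} (U V : M l) (a : A) :
    D l U V * a ∈ cellSpan R D (l ≤ ·) := by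
  have hsum : ∑ Q, r a l V Q • D l U Q ∈ cellSpan R D (l ≤ ·) :=
    sum_mem fun Q _ => smul_mem _ _ (mem_cellSpan (p := (l ≤ ·)) le_rfl U Q)
  exact (sub_mem_iff_left _ hsum).mp (cellSpan_mono (fun _ => le_of_lt) (hA.D_mul_sub_mem U V a))

theorem mem_gt_mul (hA : IsSymmetricCellular C D ι r τ) {ν : Λ} {h : A}
    (hh : h ∈ cellSpan R D (ν < ·)) (a : A) : h * a ∈ cellSpan R D (ν < ·) :=
  cellSpan_le (N := (cellSpan R D (ν < ·)).comap (LinearMap.mulRight R a))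
    (fun m hm X Y => cellSpan_mono (fun _ (h : m ≤ _) => hm.trans_le h) (hA.D_mul_mem_ge X Y a))
    hh

theorem D_mul_C_mul_D_sub_mem (hA : IsSymmetricCellular C D ι r τ)
    (hΦ : ∀ l (S T U V : M l), C l S T * C l U V - Φ l T U • C l S V ∈ cellSpan R C (· < l))
    (hΨ : ∀ l (S T U V : M l), D l S T * D l U V - Ψ l T U • D l S V ∈ cellSpan R D (l < ·))
    (hk : ∀ l (V : M l), ∑ X : M l, Φ l X V * Ψ l X V = k l) {l : Λ} (U Q P V W : M l) :
    D l U Q * C l P V * D l V W - (if Q = P then k l else 0) • D l U W ∈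
      cellSpan R D (l < ·) := by
  have hcoef : ∑ X, r (C l P V) l Q X • (Ψ l X V • D l U W) =
      (if Q = P then k l else 0) • D l U W := by
    rw [← hk l V]
    simp only [hA.r_C_self hA.dual hΦ, smul_smul, ← Finset.sum_smul]
    by_cases hQP : Q = P
    · subst hQP
      simp only [↓reduceIte, hA.Φ_symm hA.dual hΦ V]
    · simp [hQP, Ne.symm hQP]
  have hsplit : D l U Q * C l P V * D l V W - ∑ X, r (C l P V) l Q X • (Ψ l X V • D l U W) =
      (D l U Q * C l P V - ∑ X, r (C l P V) l Q X • D l U X) * D l V W +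
        ∑ X, r (C l P V) l Q X • (D l U X * D l V W - Ψ l X V • D l U W) := by
    simp only [sub_mul, Finset.sum_mul, smul_mul_assoc, smul_sub, Finset.sum_sub_distrib]
    abel
  rw [← hcoef, hsplit]
  exact add_mem (hA.mem_gt_mul (hA.D_mul_sub_mem U Q _) _)
    (sum_mem fun X _ => smul_mem _ _ (hΨ l U X V W))

theorem D_mul_C_mul_D_mem (hA : IsSymmetricCellular C D ι r τ)
    (hΦ : ∀ l (S T U V : M l), C l S T * C l U V - Φ l T U • C l S V ∈ cellSpan R C (· < l))
    (hΨ : ∀ l (S T U V : M l), D l S T * D l U V - Ψ l T U • D l S V ∈ cellSpan R D (l < ·))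
    (hk : ∀ l (V : M l), ∑ X : M l, Φ l X V * Ψ l X V = k l) {l : Λ} (hl : k l = 0)
    (U Q P V W : M l) : D l U Q * C l P V * D l V W ∈ cellSpan R D (l < ·) := by
  simpa [hl] using hA.D_mul_C_mul_D_sub_mem hΦ hΨ hk U Q P V W

theorem C_mul_D_mul (hA : IsSymmetricCellular C D ι r τ) {l : Λ} (S T U : M l) (a : A) :
    C l S T * D l T U * a = ∑ Q, r a l U Q • (C l S T * D l T Q) := by
  have hz := hA.C_mul_eq_zero_of_mem_gt S T (hA.D_mul_sub_mem T U a)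
  rw [mul_sub, sub_eq_zero, Finset.mul_sum] at hz
  simp only [mul_assoc, hz, mul_smul_comm]

theorem mul_D_mul_C (hA : IsSymmetricCellular C D ι r τ) {l : Λ} (U V S : M l) (a : A) :
    a * (D l U V * C l V S) = ∑ P, r (ι a) l U P • (D l P V * C l V S) := by
  have hz := hA.mem_gt_mul_C_eq_zero (hA.mul_D_sub_mem U V a) V S
  rw [sub_mul, sub_eq_zero, Finset.sum_mul] at hz
  simp only [← mul_assoc, hz, smul_mul_assoc]

theorem mul_C_mul_D (hA : IsSymmetricCellular C D ι r τ) {l : Λ} (S V U : M l) (a : A) :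
    a * (C l S V * D l V U) = ∑ S', r a l S' S • (C l S' V * D l V U) := by
  have hz := hA.mem_lt_mul_D_eq_zero (hA.mul_C_sub_mem a l S V) V U
  rw [sub_mul, sub_eq_zero, Finset.sum_mul] at hz
  simp only [← mul_assoc, hz, smul_mul_assoc]

theorem C_mul_D_mul_mul_C_mul_D_eq_zero (hA : IsSymmetricCellular C D ι r τ)
    (hΦ : ∀ l (S T U V : M l), C l S T * C l U V - Φ l T U • C l S V ∈ cellSpan R C (· < l))
    (hΨ : ∀ l (S T U V : M l), D l S T * D l U V - Ψ l T U • D l S V ∈ cellSpan R D (l < ·))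
    (hk : ∀ l (V : M l), ∑ X : M l, Φ l X V * Ψ l X V = k l) {l m : Λ} (hl : k l = 0)
    (S T U : M l) (a : A) (P V W : M m) :
    C l S T * D l T U * a * (C m P V * D m V W) = 0 := by
  have hassoc : C l S T * D l T U * a * (C m P V * D m V W) =
      C l S T * (D l T U * a * C m P V) * D m V W := by
    simp only [mul_assoc]
  by_cases hml : m ≤ l
  · by_cases hlm : l ≤ m
    · obtain rfl := le_antisymm hlm hml
      rw [hA.C_mul_D_mul, Finset.sum_mul]
      refine Finset.sum_eq_zero fun Q _ => ?_
      rw [smul_mul_assoc, show C l S T * D l T Q * (C l P V * D l V W) =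
          C l S T * (D l T Q * C l P V * D l V W) by simp only [mul_assoc],
        hA.C_mul_eq_zero_of_mem_gt S T (hA.D_mul_C_mul_D_mem hΦ hΨ hk hl T Q P V W), smul_zero]
    · rw [hassoc, hA.D_mul_mul_C_eq_zero hlm, mul_zero, zero_mul]
  · rw [hassoc, hA.C_mul_mul_D_eq_zero hml]

theorem D_mul_C_mul_mul_D_mul_C_eq_zero (hA : IsSymmetricCellular C D ι r τ)
    (hΦ : ∀ l (S T U V : M l), C l S T * C l U V - Φ l T U • C l S V ∈ cellSpan R C (· < l))
    (hΨ : ∀ l (S T U V : M l), D l S T * D l U V - Ψ l T U • D l S V ∈ cellSpan R D (l < ·))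
    (hk : ∀ l (V : M l), ∑ X : M l, Φ l X V * Ψ l X V = k l) {l m : Λ} (hm : k m = 0)
    (U V S : M l) (a : A) (P W Q : M m) :
    D l U V * C l V S * a * (D m P W * C m W Q) = 0 := by
  have hassoc : D l U V * C l V S * a * (D m P W * C m W Q) =
      D l U V * (C l V S * a * D m P W) * C m W Q := by
    simp only [mul_assoc]
  by_cases hml : m ≤ l
  · by_cases hlm : l ≤ m
    · obtain rfl := le_antisymm hlm hml
      rw [mul_assoc, hA.mul_D_mul_C, Finset.mul_sum]
      refine Finset.sum_eq_zero fun P' _ => ?_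
      rw [mul_smul_comm]
      obtain rfl | hSP := eq_or_ne S P'
      · rw [show D l U V * C l V S * (D l S W * C l W Q) =
            D l U V * C l V S * D l S W * C l W Q by simp only [mul_assoc],
          hA.mem_gt_mul_C_eq_zero (hA.D_mul_C_mul_D_mem hΦ hΨ hk hm U V V S W) W Q, smul_zero]
      · rw [show D l U V * C l V S * (D l P' W * C l W Q) =
            D l U V * (C l V S * D l P' W) * C l W Q by simp only [mul_assoc],
          hA.C_mul_D_eq_zero_of_ne hSP, mul_zero, zero_mul, smul_zero]
    · rw [hassoc, hA.D_mul_mul_C_eq_zero hlm]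
  · rw [hassoc, hA.C_mul_mul_D_eq_zero hml, mul_zero, zero_mul]

end IsSymmetricCellular

end Symmetric

end Cellular

theorem I_cubed_zero_and_in_radical_general
    {R A : Type*} [CommRing R] [Ring A] [Algebra R A]
    {Λ : Type*} [PartialOrder Λ] [DecidableEq Λ]
    {M : Λ → Type*} [∀ l, Fintype (M l)] [∀ l, DecidableEq (M l)]
    (C D : ∀ l, M l → M l → A)
    (ι : A →ₗ[R] A)
    (hι2 : ∀ x, ι (ι x) = x)
    (hιmul : ∀ x y, ι (x * y) = ι y * ι x)
    (hC2 : ∀ l (S T : M l), ι (C l S T) - C l T S ∈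
      Submodule.span R {x | ∃ m, ∃ U V : M m, m < l ∧ x = C m U V})
    (r : A → ∀ l, M l → M l → R)
    (hC3 : ∀ (a : A) l (S T : M l), a * C l S T - ∑ S', r a l S' S • C l S' T ∈
      Submodule.span R {x | ∃ m, ∃ U V : M m, m < l ∧ x = C m U V})
    (τ : A →ₗ[R] R)
    (hτtr : ∀ x y, τ (x * y) = τ (y * x))
    (bD : Module.Basis ((l : Λ) × (M l × M l)) R A)
    (hbD : ∀ l S T, bD ⟨l, (S, T)⟩ = D l S T)
    (hdual : ∀ l m (S T : M l) (U V : M m),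
      τ (C l S T * D m U V) =
        if (⟨l, (S, T)⟩ : (l : Λ) × (M l × M l)) = ⟨m, (V, U)⟩ then 1 else 0)
    (Φ Ψ : ∀ l, M l → M l → R)
    (hΦ : ∀ l (S T U V : M l), C l S T * C l U V - Φ l T U • C l S V ∈
      Submodule.span R {x | ∃ m, ∃ U' V' : M m, m < l ∧ x = C m U' V'})
    (hΨ : ∀ l (S T U V : M l), D l S T * D l U V - Ψ l T U • D l S V ∈
      Submodule.span R {x | ∃ m, ∃ U' V' : M m, l < m ∧ x = D m U' V'})
    (k : Λ → R)
    (hk : ∀ l (V : M l), ∑ X : M l, Φ l X V * Ψ l X V = k l) :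
    ∀ I : Submodule R A,
      I = (⨆ l ∈ {l : Λ | k l = 0},
            Submodule.span R {x : A | ∃ S U V : M l, x = C l S V * D l V U}) +
          (⨆ l ∈ {l : Λ | k l = 0},
            Submodule.span R {x : A | ∃ S U V : M l, x = D l U V * C l V S}) →
      (∀ x ∈ I, ∀ y ∈ I, ∀ z ∈ I, x * y * z = 0) ∧
      (∀ x ∈ I, x ∈ Ideal.jacobson (⊥ : Ideal A)) := by
  intro I hI
  have hDbD : (fun b : (l : Λ) × (M l × M l) => D b.1 b.2.1 b.2.2) = ⇑bD :=
    funext fun ⟨l, S, T⟩ => (hbD l S T).symm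
  have hA : IsSymmetricCellular C D ι r τ :=
    { ι_ι := hι2, ι_mul := hιmul, ι_C_sub_mem := hC2, mul_C_sub_mem := hC3,
      trace_mul_comm := hτtr, dual := hdual, span_D := by rw [hDbD, bD.span_eq] }
  rw [← span_iUnion₂, ← span_iUnion₂, Submodule.add_eq_sup] at hI
  subst hI
  refine cube_eq_zero_and_mem_jacobson_of_sup_span ?_ ?_ ?_ ?_ <;>
    simp only [Set.mem_iUnion]
  · rintro _ ⟨l, hl, S, U, V, rfl⟩ a _ ⟨m, -, P, W, X, rfl⟩
    exact hA.C_mul_D_mul_mul_C_mul_D_eq_zero hΦ hΨ hk hl S V U a P X W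
  · rintro _ ⟨l, -, S, U, V, rfl⟩ a _ ⟨m, hm, Q, P, W, rfl⟩
    exact hA.D_mul_C_mul_mul_D_mul_C_eq_zero hΦ hΨ hk hm U V S a P W Q
  · rintro a _ ⟨l, hl, S, U, V, rfl⟩
    rw [hA.mul_C_mul_D]
    exact sum_mem fun S' _ => smul_mem _ _ (subset_span (Set.mem_biUnion hl ⟨S', U, V, rfl⟩))
  · rintro a _ ⟨l, hl, S, U, V, rfl⟩
    rw [hA.mul_D_mul_C]
    exact sum_mem fun P _ => smul_mem _ _ (subset_span (Set.mem_biUnion hl ⟨S, P, V, rfl⟩))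

/-- Theorem 4.2(1): with `I = I^Λ + I_D^Λ` (sums over `l` with `k l = 0` of the spans
of the `C*D` and `D*C` products), one has `I³ = 0`; in particular `I` is contained in
the Jacobson radical of `A`. -/
theorem I_cubed_zero_and_in_radical
    {R A : Type*} [CommRing R] [Ring A] [Algebra R A]
    {Λ : Type*} [PartialOrder Λ] [Fintype Λ] [DecidableEq Λ]
    {M : Λ → Type*} [∀ l, Fintype (M l)] [∀ l, DecidableEq (M l)]
    (C D : ∀ l, M l → M l → A)
    (bC : Module.Basis ((l : Λ) × (M l × M l)) R A)
    (hbC : ∀ l S T, bC ⟨l, (S, T)⟩ = C l S T)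
    (ι : A →ₗ[R] A)
    (hι2 : ∀ x, ι (ι x) = x)
    (hιmul : ∀ x y, ι (x * y) = ι y * ι x)
    (hC2 : ∀ l (S T : M l), ι (C l S T) - C l T S ∈
      Submodule.span R {x | ∃ m, ∃ U V : M m, m < l ∧ x = C m U V})
    (r : A → ∀ l, M l → M l → R)
    (hC3 : ∀ (a : A) l (S T : M l), a * C l S T - ∑ S', r a l S' S • C l S' T ∈
      Submodule.span R {x | ∃ m, ∃ U V : M m, m < l ∧ x = C m U V})
    (τ : A →ₗ[R] R)
    (hτtr : ∀ x y, τ (x * y) = τ (y * x))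
    (bD : Module.Basis ((l : Λ) × (M l × M l)) R A)
    (hbD : ∀ l S T, bD ⟨l, (S, T)⟩ = D l S T)
    (hdual : ∀ l m (S T : M l) (U V : M m),
      τ (C l S T * D m U V) =
        if (⟨l, (S, T)⟩ : (l : Λ) × (M l × M l)) = ⟨m, (V, U)⟩ then 1 else 0)
    (Φ Ψ : ∀ l, M l → M l → R)
    (hΦ : ∀ l (S T U V : M l), C l S T * C l U V - Φ l T U • C l S V ∈
      Submodule.span R {x | ∃ m, ∃ U' V' : M m, m < l ∧ x = C m U' V'})
    (hΨ : ∀ l (S T U V : M l), D l S T * D l U V - Ψ l T U • D l S V ∈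
      Submodule.span R {x | ∃ m, ∃ U' V' : M m, l < m ∧ x = D m U' V'})
    [IsDomain R]
    (k : Λ → R)
    (hk : ∀ l (V : M l), ∑ X : M l, Φ l X V * Ψ l X V = k l) :
    ∀ I : Submodule R A,
      I = (⨆ l ∈ {l : Λ | k l = 0},
            Submodule.span R {x : A | ∃ S U V : M l, x = C l S V * D l V U}) +
          (⨆ l ∈ {l : Λ | k l = 0},
            Submodule.span R {x : A | ∃ S U V : M l, x = D l U V * C l V S}) →
      (∀ x ∈ I, ∀ y ∈ I, ∀ z ∈ I, x * y * z = 0) ∧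
      (∀ x ∈ I, x ∈ Ideal.jacobson (⊥ : Ideal A)) :=
  I_cubed_zero_and_in_radical_general C D ι hι2 hιmul hC2 r hC3 τ hτtr bD hbD hdual Φ Ψ hΦ hΨ k hk
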